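/- Let G' be a loopless directed graph without multiple arcs on n vertices in which every vertex has in-degree N and out-degree N. Then there exists a set Z of vertices with |Z| ≥ n/(N² + N + 1) such that no two distinct vertices of Z have a common in-neighbor and no arc of G' joins two vertices of Z. -/
import Mathlib


/-- The in-degree of `v` in the directed graph with Boolean arc relation `A`. -/
def inDeg {m : ℕ} (A : Fin m → Fin m → Bool) (v : Fin m) : ℕ :=
  (Finset.univ.filter fun u => A u v).card

/-- The out-degree of `v` in the directed graph with Boolean arc relation `A`. -/
def outDeg {m : ℕ} (A : Fin m → Fin m → Bool) (v : Fin m) : ℕ :=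
  (Finset.univ.filter fun w => A v w).card

/-- If every vertex of a loopless directed graph `G'` without multiple arcs
on `n` vertices has in-degree `N` and out-degree `N`, then there is a set `Z` of at least
`n/(N² + N + 1)` vertices such that no two distinct vertices of `Z` have a common
in-neighbor and no arc of `G'` joins two vertices of `Z`. -/
theorem exists_independent_set (n N : ℕ) (A : Fin n → Fin n → Bool)
    (hloopless : ∀ v, A v v = false)
    (hreg : ∀ v, inDeg A v = N ∧ outDeg A v = N) :
    ∃ Z : Finset (Fin n),
      (n : ℝ) / (N ^ 2 + N + 1) ≤ (Z.card : ℝ) ∧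
      (∀ z₁ ∈ Z, ∀ z₂ ∈ Z, z₁ ≠ z₂ → ∀ u, ¬(A u z₁ = true ∧ A u z₂ = true)) ∧
      (∀ z₁ ∈ Z, ∀ z₂ ∈ Z, A z₁ z₂ = false) := by
  classical
  set conflict : Fin n → Fin n → Prop := fun x y =>
    A x y = true ∨ A y x = true ∨ ∃ u, A u x = true ∧ A u y = true with hconf
  have key : ∀ S : Finset (Fin n), ∃ Z : Finset (Fin n), Z ⊆ S ∧
      S.card ≤ (N ^ 2 + N + 1) * Z.card ∧
      ∀ z₁ ∈ Z, ∀ z₂ ∈ Z, z₁ ≠ z₂ → ¬ conflict z₁ z₂ := by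
    intro S
    induction S using Finset.strongInduction with
    | _ S ih =>
      rcases S.eq_empty_or_nonempty with rfl | ⟨z, hz⟩
      · exact ⟨∅, by simp⟩
      · set B : Finset (Fin n) :=
          Finset.univ.filter (fun y => y ≠ z ∧ conflict z y) with hB
        have hBsub : B ⊆ (Finset.univ.filter fun w => A z w = true) ∪
            (Finset.univ.filter fun u => A u z = true) ∪
            (Finset.univ.filter fun u => A u z = true).biUnion
              (fun u => (Finset.univ.filter fun w => A u w = true).erase z) := by
          intro y hy
          simp only [hB, Finset.mem_filter, Finset.mem_univ, true_and] at hy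
          obtain ⟨hyz, hc⟩ := hy
          simp only [Finset.mem_union, Finset.mem_biUnion, Finset.mem_filter,
            Finset.mem_univ, true_and, Finset.mem_erase]
          rcases hc with h | h | ⟨u, h1, h2⟩
          · exact Or.inl (Or.inl h)
          · exact Or.inl (Or.inr h)
          · exact Or.inr ⟨u, h1, hyz, h2⟩
        have hin : (Finset.univ.filter fun u => A u z = true).card = N := (hreg z).1
        have hout : ∀ v, (Finset.univ.filter fun w => A v w = true).card = N :=
          fun v => (hreg v).2
        have hBcard : B.card ≤ N ^ 2 + N := by
          have h1 := Finset.card_le_card hBsub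
          have h2 := Finset.card_union_le
            ((Finset.univ.filter fun w => A z w = true) ∪
              (Finset.univ.filter fun u => A u z = true))
            ((Finset.univ.filter fun u => A u z = true).biUnion
              (fun u => (Finset.univ.filter fun w => A u w = true).erase z))
          have h3 := Finset.card_union_le
            (Finset.univ.filter fun w => A z w = true)
            (Finset.univ.filter fun u => A u z = true)
          have h4 : ((Finset.univ.filter fun u => A u z = true).biUnion
              (fun u => (Finset.univ.filter fun w => A u w = true).erase z)).card
              ≤ N * (N - 1) := by
            calc _ ≤ ∑ u ∈ (Finset.univ.filter fun u => A u z = true),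
                  ((Finset.univ.filter fun w => A u w = true).erase z).card :=
                Finset.card_biUnion_le
              _ ≤ ∑ _u ∈ (Finset.univ.filter fun u => A u z = true), (N - 1) := by
                  apply Finset.sum_le_sum
                  intro u hu
                  simp only [Finset.mem_filter, Finset.mem_univ, true_and] at hu
                  have hzmem : z ∈ Finset.univ.filter fun w => A u w = true := by
                    simp [hu]
                  rw [Finset.card_erase_of_mem hzmem, hout u]
              _ = N * (N - 1) := by rw [Finset.sum_const, hin, smul_eq_mul]
          have h5 : N * (N - 1) + N ≤ N ^ 2 := by
            cases N with
            | zero => simp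
            | succ k => simp [Nat.succ_sub_one]; nlinarith
          rw [hout z, hin] at h3
          omega
        have hcard' : (insert z B).card ≤ N ^ 2 + N + 1 := by
          have := Finset.card_insert_le z B
          omega
        set S' := S \ insert z B with hS'
        have hS'ss : S' ⊂ S := by
          refine Finset.ssubset_iff_of_subset Finset.sdiff_subset |>.mpr ?_
          exact ⟨z, hz, by simp [hS']⟩
        obtain ⟨Z', hZ'S, hcardZ, hind⟩ := ih S' hS'ss
        have hzZ' : z ∉ Z' := by
          intro h
          have := hZ'S h
          rw [hS', Finset.mem_sdiff] at this
          exact this.2 (Finset.mem_insert_self z B)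
        refine ⟨insert z Z', ?_, ?_, ?_⟩
        · intro x hx
          rcases Finset.mem_insert.mp hx with rfl | hx
          · exact hz
          · exact ((Finset.mem_sdiff.mp (hZ'S hx)).1)
        · have hsplit : S.card ≤ S'.card + (insert z B).card := by
            have h6 : S.card ≤ (S ∪ insert z B).card :=
              Finset.card_le_card Finset.subset_union_left
            have h7 := Finset.card_sdiff_add_card S (insert z B)
            have h8 : S'.card = (S \ insert z B).card := rfl
            omega
          rw [Finset.card_insert_of_notMem hzZ']
          calc S.card ≤ S'.card + (insert z B).card := hsplit
            _ ≤ (N ^ 2 + N + 1) * Z'.card + (N ^ 2 + N + 1) := by omega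
            _ = (N ^ 2 + N + 1) * (Z'.card + 1) := by ring
        · have hnoconf : ∀ y ∈ Z', ¬ conflict z y := by
            intro y hy hc
            have hyS' := hZ'S hy
            rw [hS', Finset.mem_sdiff] at hyS'
            apply hyS'.2
            by_cases hyz : y = z
            · exact hyz ▸ Finset.mem_insert_self z B
            · exact Finset.mem_insert_of_mem (by simp [hB, hyz, hc])
          have hsymm : ∀ x y, conflict x y → conflict y x := by
            intro x y h
            rcases h with h | h | ⟨u, h1, h2⟩
            · exact Or.inr (Or.inl h)
            · exact Or.inl h
            · exact Or.inr (Or.inr ⟨u, h2, h1⟩)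
          intro z₁ hz₁ z₂ hz₂ hne hc
          rcases Finset.mem_insert.mp hz₁ with h₁ | h₁
          · rcases Finset.mem_insert.mp hz₂ with h₂ | h₂
            · exact hne (h₁.trans h₂.symm)
            · exact hnoconf z₂ h₂ (h₁ ▸ hc)
          · rcases Finset.mem_insert.mp hz₂ with h₂ | h₂
            · exact hnoconf z₁ h₁ (hsymm _ _ (h₂ ▸ hc))
            · exact hind z₁ h₁ z₂ h₂ hne hc
  obtain ⟨Z, _, hcard, hind⟩ := key Finset.univ
  rw [Finset.card_univ, Fintype.card_fin] at hcard
  refine ⟨Z, ?_, ?_, ?_⟩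
  · have hpos : (0 : ℝ) < (N : ℝ) ^ 2 + N + 1 := by positivity
    rw [div_le_iff₀ hpos]
    have : (n : ℝ) ≤ ((N ^ 2 + N + 1) * Z.card : ℕ) := by exact_mod_cast hcard
    push_cast at this ⊢
    linarith
  · intro z₁ h₁ z₂ h₂ hne u hu
    exact hind z₁ h₁ z₂ h₂ hne (Or.inr (Or.inr ⟨u, hu.1, hu.2⟩))
  · intro z₁ h₁ z₂ h₂
    by_cases hne : z₁ = z₂
    · subst hne; exact hloopless z₁
    · by_contra hA
      exact hind z₁ h₁ z₂ h₂ hne (Or.inl (by simpa using hA))
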